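/- arXiv:2310.14359 — 5 statements merged into one kernel-verified Lean document; each statement's English description precedes it below -/
import Mathlib

section
/- The largest eigenvalue of the standard modularity matrix B̂ equals max{0, 1 − λ₂}, where λ₂ is the Fiedler value (second smallest eigenvalue) of the normalized Laplacian L. -/
open Matrix Finset

noncomputable section

def matrixConnected {m : Type*} [Fintype m] (A : Matrix m m ℝ) : Prop :=
  ∀ S : Set m, S.Nonempty → Sᶜ.Nonempty → ∃ i ∈ S, ∃ j ∈ Sᶜ, A i j ≠ 0

/-- Maximum principle: if `d i * u i = ∑ j, A i j * u j` with `A` nonnegative,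
connected, and row sums `d`, then `u` is constant. -/
lemma connected_harmonic_const {n : ℕ} (A : Matrix (Fin n) (Fin n) ℝ)
    (hconn : matrixConnected A) (hnonneg : ∀ i j, 0 ≤ A i j)
    (d : Fin n → ℝ) (hdi : ∀ i, d i = ∑ j, A i j)
    (u : Fin n → ℝ) (hu : ∀ i, d i * u i = ∑ j, A i j * u j) :
    ∀ i j, u i = u j := by
  intro a b
  have hne : (univ : Finset (Fin n)).Nonempty := ⟨a, mem_univ a⟩
  set M := univ.sup' hne u with hM
  obtain ⟨i0, -, hi0⟩ := Finset.exists_mem_eq_sup' hne u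
  have hle : ∀ j, u j ≤ M := fun j => Finset.le_sup' u (mem_univ j)
  have hall : ∀ i, u i = M := by
    by_contra hc
    push_neg at hc
    obtain ⟨k, hk⟩ := hc
    obtain ⟨i, hiS, j, hjS, hij⟩ :=
      hconn {i | u i = M} ⟨i0, hi0.symm⟩ ⟨k, hk⟩
    have hiS' : u i = M := hiS
    have hjS' : u j ≠ M := hjS
    have hjlt : u j < M := lt_of_le_of_ne (hle j) hjS'
    have hA : 0 < A i j := (hnonneg i j).lt_of_ne (Ne.symm hij)
    have hlt : ∑ t, A i t * u t < ∑ t, A i t * M := by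
      apply Finset.sum_lt_sum
      · intro t _
        exact mul_le_mul_of_nonneg_left (hle t) (hnonneg i t)
      · exact ⟨j, mem_univ j, by nlinarith⟩
    have : d i * M < d i * M := by
      calc d i * M = d i * u i := by rw [hiS']
        _ = ∑ t, A i t * u t := hu i
        _ < ∑ t, A i t * M := hlt
        _ = d i * M := by rw [hdi i, Finset.sum_mul]
    exact lt_irrefl _ this
  rw [hall a, hall b]

/-- The largest eigenvalue of the standard modularity matrix `B̂`
equals `max {0, 1 − λ₂}`, where `λ₂` is the Fiedler value of `L`. -/
theorem modularity_top_eigenvalue {n : ℕ}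
    (A : Matrix (Fin n) (Fin n) ℝ)
    (hsymm : A.IsSymm) (hnonneg : ∀ i j, 0 ≤ A i j)
    (hconn : matrixConnected A)
    (d : Fin n → ℝ) (hd : d = A *ᵥ (fun _ => 1))
    (hstoch : ∑ i, d i = 1) (hdpos : ∀ i, 0 < d i)
    (sqrtd : Fin n → ℝ) (hsqrtd : sqrtd = fun i => Real.sqrt (d i))
    (L : Matrix (Fin n) (Fin n) ℝ)
    (hL : L = 1 - (Matrix.diagonal fun i => (Real.sqrt (d i))⁻¹) * A *
        (Matrix.diagonal fun i => (Real.sqrt (d i))⁻¹))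
    (Bhat : Matrix (Fin n) (Fin n) ℝ)
    (hBhat : Bhat = (1 - L) - Matrix.vecMulVec sqrtd sqrtd)
    (lam2 : ℝ)
    -- λ₂ is the smallest nonzero eigenvalue (Fiedler value) of L:
    (hlam2pos : 0 < lam2)
    (hlam2ev : ∃ v : Fin n → ℝ, v ≠ 0 ∧ L *ᵥ v = lam2 • v)
    (hlam2min : ∀ (μ : ℝ) (v : Fin n → ℝ), v ≠ 0 → L *ᵥ v = μ • v →
        μ = 0 ∨ lam2 ≤ μ) :
    (∃ v : Fin n → ℝ, v ≠ 0 ∧ Bhat *ᵥ v = max 0 (1 - lam2) • v) ∧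
    (∀ (ν : ℝ) (v : Fin n → ℝ), v ≠ 0 → Bhat *ᵥ v = ν • v →
        ν ≤ max 0 (1 - lam2)) := by
  -- basic facts
  have hn : 0 < n := by
    rcases Nat.eq_zero_or_pos n with h | h
    · exfalso; subst h; simp at hstoch
    · exact h
  have hdi : ∀ i, d i = ∑ j, A i j := by
    intro i; rw [hd]; simp [mulVec, dotProduct]
  have hsd_pos : ∀ i, 0 < sqrtd i := by
    intro i; rw [hsqrtd]; exact Real.sqrt_pos.mpr (hdpos i)
  have hsd_sq : ∀ i, sqrtd i * sqrtd i = d i := by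
    intro i; rw [hsqrtd]; exact Real.mul_self_sqrt (hdpos i).le
  have hsds : sqrtd ⬝ᵥ sqrtd = 1 := by
    unfold dotProduct
    rw [← hstoch]
    exact Finset.sum_congr rfl fun i _ => hsd_sq i
  -- pointwise formula for L *ᵥ v
  have hLapp : ∀ v : Fin n → ℝ, L *ᵥ v =
      fun i => v i - (sqrtd i)⁻¹ * ∑ j, A i j * ((sqrtd j)⁻¹ * v j) := by
    intro v
    funext i
    rw [hL, sub_mulVec, one_mulVec, ← mulVec_mulVec, ← mulVec_mulVec]
    simp only [Pi.sub_apply, mulVec_diagonal, hsqrtd]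
    congr 1
    congr 1
    simp only [mulVec, dotProduct]
    apply Finset.sum_congr rfl
    intro j _
    congr 1
    exact mulVec_diagonal (fun i => (Real.sqrt (d i))⁻¹) v j
  -- sqrtd is in the kernel of L
  have hLsd : L *ᵥ sqrtd = 0 := by
    funext i
    rw [hLapp]
    have h1 : ∀ j, A i j * ((sqrtd j)⁻¹ * sqrtd j) = A i j := by
      intro j; rw [inv_mul_cancel₀ (hsd_pos j).ne', mul_one]
    simp only [Pi.zero_apply]
    rw [Finset.sum_congr rfl fun j _ => h1 j, ← hdi i, ← hsd_sq i]
    field_simp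
    simp
  -- L is symmetric as a bilinear form
  have hLsymm : ∀ x y : Fin n → ℝ, x ⬝ᵥ (L *ᵥ y) = (L *ᵥ x) ⬝ᵥ y := by
    have hLt : Lᵀ = L := by
      rw [hL]
      rw [transpose_sub, transpose_one, transpose_mul, transpose_mul,
        diagonal_transpose, hsymm.eq, Matrix.mul_assoc]
    intro x y
    rw [dotProduct_mulVec, ← mulVec_transpose, hLt]
  -- pointwise formula for Bhat *ᵥ v
  have hBapp : ∀ v : Fin n → ℝ,
      Bhat *ᵥ v = v - L *ᵥ v - (sqrtd ⬝ᵥ v) • sqrtd := by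
    intro v
    rw [hBhat, sub_mulVec, sub_mulVec, one_mulVec]
    congr 1
    funext i
    simp only [mulVec, dotProduct, vecMulVec_apply, Pi.smul_apply, smul_eq_mul]
    rw [Finset.sum_mul]
    exact Finset.sum_congr rfl fun j _ => by ring
  -- kernel of L orthogonal to sqrtd is trivial (connectivity)
  have hker : ∀ w : Fin n → ℝ, L *ᵥ w = 0 → sqrtd ⬝ᵥ w = 0 → w = 0 := by
    intro w hLw hdw
    set u : Fin n → ℝ := fun j => (sqrtd j)⁻¹ * w j with hu
    have hw : ∀ i, w i = sqrtd i * u i := by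
      intro i
      show w i = sqrtd i * ((sqrtd i)⁻¹ * w i)
      rw [← mul_assoc, mul_inv_cancel₀ (hsd_pos i).ne', one_mul]
    have heq : ∀ i, d i * u i = ∑ j, A i j * u j := by
      intro i
      have h0 := congrFun hLw i
      rw [hLapp] at h0
      simp only [Pi.zero_apply] at h0
      have hne : sqrtd i ≠ 0 := (hsd_pos i).ne'
      have hwi : w i = (sqrtd i)⁻¹ * ∑ j, A i j * ((sqrtd j)⁻¹ * w j) := by
        linarith
      have hsum : ∑ j, A i j * u j = ∑ j, A i j * ((sqrtd j)⁻¹ * w j) :=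
        Finset.sum_congr rfl fun j _ => rfl
      have hui : u i = (sqrtd i)⁻¹ * w i := rfl
      rw [hsum, hui, ← hsd_sq i]
      calc sqrtd i * sqrtd i * ((sqrtd i)⁻¹ * w i)
          = sqrtd i * (sqrtd i * (sqrtd i)⁻¹ * w i) := by ring
        _ = sqrtd i * w i := by rw [mul_inv_cancel₀ hne, one_mul]
        _ = ∑ j, A i j * ((sqrtd j)⁻¹ * w j) := by
            rw [hwi, ← mul_assoc, mul_inv_cancel₀ hne, one_mul]
    have hconst := connected_harmonic_const A hconn hnonneg d hdi u heq
    set i0 : Fin n := ⟨0, hn⟩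
    have hsum : sqrtd ⬝ᵥ w = u i0 := by
      unfold dotProduct
      have : ∀ i, sqrtd i * w i = d i * u i0 := by
        intro i
        rw [hw i, ← mul_assoc, hsd_sq i, hconst i i0]
      rw [Finset.sum_congr rfl fun i _ => this i, ← Finset.sum_mul, hstoch,
        one_mul]
    have hu0 : u i0 = 0 := by rw [← hsum, hdw]
    funext i
    rw [hw i, hconst i i0, hu0, mul_zero]
    rfl
  -- key spectral dichotomy
  have hkey : ∀ (ν : ℝ) (v : Fin n → ℝ), v ≠ 0 → Bhat *ᵥ v = ν • v →
      ν = 0 ∨ ν ≤ 1 - lam2 := by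
    intro ν v hv hev
    set c : ℝ := sqrtd ⬝ᵥ v with hc
    have hEv : ν • v = v - L *ᵥ v - c • sqrtd := by rw [← hev, hBapp]
    -- dot with sqrtd gives ν * c = 0
    have hνc : ν * c = 0 := by
      have := congrArg (fun z => sqrtd ⬝ᵥ z) hEv
      simp only [dotProduct_sub, dotProduct_smul, smul_eq_mul] at this
      rw [hLsymm sqrtd v, hLsd, hsds] at this
      simpa [← hc] using this
    set w : Fin n → ℝ := v - c • sqrtd with hwdef
    have hdw : sqrtd ⬝ᵥ w = 0 := by
      rw [hwdef, dotProduct_sub, dotProduct_smul, hsds]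
      simp [← hc]
    have hLw : L *ᵥ w = L *ᵥ v := by
      rw [hwdef, mulVec_sub, mulVec_smul, hLsd, smul_zero, sub_zero]
    have hLww : L *ᵥ w = (1 - ν) • w := by
      have hveq : v = w + c • sqrtd := by rw [hwdef]; abel
      rw [hLw]
      have h1 : L *ᵥ v = v - c • sqrtd - ν • v := by
        rw [hEv]; abel
      rw [h1, hveq]
      have h2 : ν • (w + c • sqrtd) = ν • w + (ν * c) • sqrtd := by
        rw [smul_add, smul_smul]
      rw [h2, hνc]
      simp only [zero_smul, add_zero, sub_smul, one_smul]
      abel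
    by_cases hw : w = 0
    · -- v = c • sqrtd, c ≠ 0, so ν = 0
      left
      have hvc : v = c • sqrtd := by
        have := hwdef
        rw [hw] at this
        have := this.symm
        rwa [sub_eq_zero] at this
      have hcne : c ≠ 0 := by
        intro h0
        apply hv
        rw [hvc, h0, zero_smul]
      exact (mul_eq_zero.mp hνc).resolve_right hcne
    · rcases hlam2min (1 - ν) w hw hLww with h | h
      · exfalso
        apply hw
        apply hker w _ hdw
        rw [hLww, h, zero_smul]
      · right; linarith
  constructor
  · -- existence of top eigenvector
    by_cases hcase : lam2 < 1
    · obtain ⟨v, hv, hev⟩ := hlam2ev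
      have hdv : sqrtd ⬝ᵥ v = 0 := by
        have h1 : lam2 * (sqrtd ⬝ᵥ v) = 0 := by
          have : sqrtd ⬝ᵥ (L *ᵥ v) = 0 := by
            rw [hLsymm sqrtd v, hLsd]
            simp
          rw [hev] at this
          simpa [dotProduct_smul] using this
        exact (mul_eq_zero.mp h1).resolve_left hlam2pos.ne'
      refine ⟨v, hv, ?_⟩
      rw [hBapp, hev, hdv, zero_smul, sub_zero,
        max_eq_right (by linarith : (0:ℝ) ≤ 1 - lam2)]
      funext i
      simp only [Pi.sub_apply, Pi.smul_apply, smul_eq_mul]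
      ring
    · push_neg at hcase
      refine ⟨sqrtd, ?_, ?_⟩
      · intro h0
        have := congrFun h0 ⟨0, hn⟩
        exact (hsd_pos ⟨0, hn⟩).ne' this
      · rw [hBapp, hLsd, hsds, max_eq_left (by linarith : 1 - lam2 ≤ (0:ℝ)),
          zero_smul, one_smul]
        abel
  · -- upper bound
    intro ν v hv hev
    rcases hkey ν v hv hev with h | h
    · rw [h]; exact le_max_left _ _
    · exact le_trans h (le_max_right _ _)
end
end

section
/- If λ₂ > 1, then the largest eigenvalue of B̂ is 0, it is simple, and its unique (up to sign) unit eigenvector is d^{1/2}, which has all entries of one sign. -/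
open Matrix Finset

noncomputable section

/-- If `λ₂ > 1`, the largest eigenvalue of `B̂` is `0`, it is simple, and its
unique (up to scaling) eigenvector is `d^{1/2}`, which is entrywise positive. -/
theorem modularity_top_eigenvalue_lam2_gt_one {n : ℕ}
    (A : Matrix (Fin n) (Fin n) ℝ)
    (hsymm : A.IsSymm) (hnonneg : ∀ i j, 0 ≤ A i j)
    (hconn : matrixConnected A)
    (d : Fin n → ℝ) (hd : d = A *ᵥ (fun _ => 1))
    (hstoch : ∑ i, d i = 1) (hdpos : ∀ i, 0 < d i)
    (sqrtd : Fin n → ℝ) (hsqrtd : sqrtd = fun i => Real.sqrt (d i))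
    (L : Matrix (Fin n) (Fin n) ℝ)
    (hL : L = 1 - (Matrix.diagonal fun i => (Real.sqrt (d i))⁻¹) * A *
        (Matrix.diagonal fun i => (Real.sqrt (d i))⁻¹))
    (Bhat : Matrix (Fin n) (Fin n) ℝ)
    (hBhat : Bhat = (1 - L) - Matrix.vecMulVec sqrtd sqrtd)
    (lam2 : ℝ)
    (hlam2pos : 0 < lam2)
    (hlam2ev : ∃ v : Fin n → ℝ, v ≠ 0 ∧ L *ᵥ v = lam2 • v)
    (hlam2min : ∀ (μ : ℝ) (v : Fin n → ℝ), v ≠ 0 → L *ᵥ v = μ • v →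
        μ = 0 ∨ lam2 ≤ μ)
    (hgt : 1 < lam2) :
    Bhat *ᵥ sqrtd = 0 ∧
    (∀ (ν : ℝ) (v : Fin n → ℝ), v ≠ 0 → Bhat *ᵥ v = ν • v → ν ≤ 0) ∧
    (∀ v : Fin n → ℝ, Bhat *ᵥ v = 0 → ∃ c : ℝ, v = c • sqrtd) ∧
    (∀ i, 0 < sqrtd i) ∧ ∑ i, sqrtd i ^ 2 = 1 := by
  -- basic facts
  have hdrow : ∀ i, d i = ∑ j, A i j := by
    intro i; rw [hd]; simp [Matrix.mulVec, dotProduct]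
  have hspos : ∀ i, 0 < sqrtd i := by
    intro i; rw [hsqrtd]; exact Real.sqrt_pos.mpr (hdpos i)
  have hssq : ∀ i, sqrtd i * sqrtd i = d i := by
    intro i; rw [hsqrtd]; exact Real.mul_self_sqrt (hdpos i).le
  have hss : sqrtd ⬝ᵥ sqrtd = 1 := by
    simp only [dotProduct]
    rw [Finset.sum_congr rfl fun i _ => hssq i]; exact hstoch
  have hsqpow : ∑ i, sqrtd i ^ 2 = 1 := by
    rw [Finset.sum_congr rfl fun i _ => (by rw [sq]; exact hssq i :
      sqrtd i ^ 2 = d i)]; exact hstoch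
  -- the normalized adjacency part of L
  have hLapp : ∀ x i, (L *ᵥ x) i = x i - (sqrtd i)⁻¹ * ∑ j, A i j * ((sqrtd j)⁻¹ * x j) := by
    intro x i
    rw [hL, Matrix.sub_mulVec, Matrix.one_mulVec]
    simp only [Pi.sub_apply, hsqrtd]
    congr 1
    simp only [Matrix.mulVec, dotProduct, Matrix.mul_apply, Matrix.diagonal_apply]
    rw [Finset.mul_sum]
    refine Finset.sum_congr rfl fun j _ => ?_
    simp [Finset.sum_ite_eq, Finset.sum_ite_eq', mul_assoc, Finset.mul_sum]
  -- L annihilates sqrtd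
  have hLs : L *ᵥ sqrtd = 0 := by
    funext i
    rw [hLapp]
    have h1 : ∀ j, A i j * ((sqrtd j)⁻¹ * sqrtd j) = A i j := by
      intro j; rw [inv_mul_cancel₀ (hspos j).ne', mul_one]
    rw [Finset.sum_congr rfl fun j _ => h1 j, ← hdrow i, ← hssq i]
    field_simp; simp
  -- symmetry of L
  have hLt : Lᵀ = L := by
    rw [hL]
    simp only [Matrix.transpose_sub, Matrix.transpose_one, Matrix.transpose_mul,
      Matrix.diagonal_transpose]
    rw [hsymm.eq, Matrix.mul_assoc]
  have hdotL : ∀ x, sqrtd ⬝ᵥ (L *ᵥ x) = 0 := by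
    intro x
    rw [Matrix.dotProduct_mulVec]
    have h0 : sqrtd ᵥ* L = 0 := by rw [← hLt, Matrix.vecMul_transpose, hLs]
    rw [h0]; simp
  -- kernel of L is spanned by sqrtd (maximum principle + connectivity)
  have hker : ∀ v : Fin n → ℝ, L *ᵥ v = 0 → ∃ c : ℝ, v = c • sqrtd := by
    intro v hv
    have hn : Nonempty (Fin n) := by
      rcases Nat.eq_zero_or_pos n with h | h
      · exfalso; subst h; simp at hstoch
      · exact ⟨⟨0, h⟩⟩
    set u : Fin n → ℝ := fun i => (sqrtd i)⁻¹ * v i with hu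
    have hvu : ∀ i, v i = sqrtd i * u i := by
      intro i
      simp only [hu]
      rw [← mul_assoc, mul_inv_cancel₀ (hspos i).ne', one_mul]
    have hkey : ∀ i, d i * u i = ∑ j, A i j * u j := by
      intro i
      have h := congrFun hv i
      rw [hLapp] at h
      simp only [Pi.zero_apply] at h
      have h2 : v i = (sqrtd i)⁻¹ * ∑ j, A i j * u j := by
        have := sub_eq_zero.mp h; simpa [hu] using this
      have h3 : sqrtd i * v i = ∑ j, A i j * u j := by
        rw [h2, ← mul_assoc, mul_inv_cancel₀ (hspos i).ne', one_mul]
      calc d i * u i = sqrtd i * sqrtd i * u i := by rw [hssq i]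
        _ = sqrtd i * v i := by rw [hvu i]; ring
        _ = ∑ j, A i j * u j := h3
    obtain ⟨i0, -, hi0⟩ := Finset.exists_max_image Finset.univ u ⟨Classical.arbitrary _, Finset.mem_univ _⟩
    set M := u i0 with hM
    have hle : ∀ j, u j ≤ M := fun j => hi0 j (Finset.mem_univ j)
    set S : Set (Fin n) := {i | u i = M} with hS
    have hSne : S.Nonempty := ⟨i0, rfl⟩
    have hall : ∀ i, u i = M := by
      by_contra hco
      push_neg at hco
      obtain ⟨k, hk⟩ := hco
      have hcne : Sᶜ.Nonempty := ⟨k, hk⟩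
      obtain ⟨i, hiS, j, hjS, hAij⟩ := hconn S hSne hcne
      have hiM : u i = M := hiS
      have hsum0 : ∑ j, A i j * (M - u j) = 0 := by
        have : ∑ j, A i j * (M - u j) = (∑ j, A i j) * M - ∑ j, A i j * u j := by
          rw [Finset.sum_mul]
          rw [← Finset.sum_sub_distrib]
          exact Finset.sum_congr rfl fun j _ => by ring
        rw [this, ← hdrow i, ← hkey i, hiM]; ring
      have hterm : ∀ j' ∈ Finset.univ, A i j' * (M - u j') = 0 := by
        rw [← Finset.sum_eq_zero_iff_of_nonneg]
        · exact hsum0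
        · intro j' _
          exact mul_nonneg (hnonneg i j') (sub_nonneg.mpr (hle j'))
      have := hterm j (Finset.mem_univ j)
      rcases mul_eq_zero.mp this with h | h
      · exact hAij h
      · exact hjS (by simpa [hS] using (sub_eq_zero.mp h).symm)
    refine ⟨M, funext fun i => ?_⟩
    rw [hvu i, hall i]; simp [mul_comm]
  -- action of Bhat
  have hBapp : ∀ x, Bhat *ᵥ x = x - L *ᵥ x - (sqrtd ⬝ᵥ x) • sqrtd := by
    intro x
    rw [hBhat, Matrix.sub_mulVec, Matrix.sub_mulVec, Matrix.one_mulVec]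
    congr 1
    funext i
    simp only [Matrix.mulVec, dotProduct, Matrix.vecMulVec_apply, Pi.smul_apply,
      smul_eq_mul, Finset.sum_mul, Finset.mul_sum]
    exact Finset.sum_congr rfl fun j _ => by ring
  -- (1) Bhat annihilates sqrtd
  have hB1 : Bhat *ᵥ sqrtd = 0 := by
    rw [hBapp, hLs, hss]; simp
  refine ⟨hB1, ?_, ?_, hspos, hsqpow⟩
  · -- all eigenvalues ≤ 0
    intro ν v hv hev
    by_contra hpos
    push_neg at hpos
    rw [hBapp] at hev
    set c := sqrtd ⬝ᵥ v with hc
    have hLv : L *ᵥ v = (1 - ν) • v - c • sqrtd := by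
      funext i
      have h := congrFun hev i
      simp only [Pi.sub_apply, Pi.smul_apply, smul_eq_mul] at h ⊢
      linarith
    have hdot : (0 : ℝ) = (1 - ν) * c - c := by
      have h := hdotL v
      rw [hLv] at h
      rw [dotProduct_sub, dotProduct_smul, dotProduct_smul, ← hc,
        hss] at h
      simpa [smul_eq_mul] using h.symm
    have hnc : ν * c = 0 := by linarith
    have hc0 : c = 0 := by
      rcases mul_eq_zero.mp hnc with h | h
      · exact absurd h (ne_of_gt hpos)
      · exact h
    rw [hc0] at hLv
    simp only [zero_smul, sub_zero] at hLv
    rcases hlam2min (1 - ν) v hv hLv with h | h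
    · -- ν = 1, so L v = 0, so v ∈ span sqrtd, but c = 0 forces v = 0
      have hν1 : ν = 1 := by linarith
      have hLv0 : L *ᵥ v = 0 := by rw [hLv, h]; simp
      obtain ⟨c', hc'⟩ := hker v hLv0
      have : c = c' := by
        rw [hc, hc', dotProduct_smul, hss]; simp
      have hc'0 : c' = 0 := by rw [← this, hc0]
      exact hv (by rw [hc', hc'0, zero_smul])
    · linarith
  · -- kernel of Bhat is spanned by sqrtd
    intro v hv0
    rw [hBapp] at hv0
    set c := sqrtd ⬝ᵥ v with hc
    refine ⟨c, ?_⟩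
    set w : Fin n → ℝ := v - c • sqrtd with hw
    have hLw : L *ᵥ w = (1 : ℝ) • w := by
      rw [hw, Matrix.mulVec_sub, Matrix.mulVec_smul, hLs, one_smul]
      have hLv : L *ᵥ v = v - c • sqrtd := by
        funext i
        have h := congrFun hv0 i
        simp only [Pi.sub_apply, Pi.zero_apply, Pi.smul_apply, smul_eq_mul] at h ⊢
        linarith
      rw [hLv]; simp
    have hw0 : w = 0 := by
      by_contra hwne
      rcases hlam2min 1 w hwne hLw with h | h
      · norm_num at h
      · linarith
    have := sub_eq_zero.mp (hw ▸ hw0)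
    rw [hw] at hw0
    funext i
    have := congrFun hw0 i
    simp only [Pi.sub_apply, Pi.zero_apply] at this
    have := sub_eq_zero.mp this
    simpa using this
end
end

section
/- The largest eigenvalue of B̂(γ) equals max{1 − γ, 1 − λ₂} for every γ > 0. -/
open Matrix Finset

noncomputable section

/-- The largest eigenvalue of `B̂(γ)` equals `max {1 − γ, 1 − λ₂}`
for every `γ > 0`. -/
theorem parametrized_modularity_top_eigenvalue {n : ℕ}
    (A : Matrix (Fin n) (Fin n) ℝ)
    (hsymm : A.IsSymm) (hnonneg : ∀ i j, 0 ≤ A i j)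
    (hconn : matrixConnected A)
    (d : Fin n → ℝ) (hd : d = A *ᵥ (fun _ => 1))
    (hstoch : ∑ i, d i = 1) (hdpos : ∀ i, 0 < d i)
    (sqrtd : Fin n → ℝ) (hsqrtd : sqrtd = fun i => Real.sqrt (d i))
    (L : Matrix (Fin n) (Fin n) ℝ)
    (hL : L = 1 - (Matrix.diagonal fun i => (Real.sqrt (d i))⁻¹) * A *
        (Matrix.diagonal fun i => (Real.sqrt (d i))⁻¹))
    (lam2 : ℝ)
    (hlam2pos : 0 < lam2)
    (hlam2ev : ∃ v : Fin n → ℝ, v ≠ 0 ∧ L *ᵥ v = lam2 • v)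
    (hlam2min : ∀ (μ : ℝ) (v : Fin n → ℝ), v ≠ 0 → L *ᵥ v = μ • v →
        μ = 0 ∨ lam2 ≤ μ)
    (γ : ℝ) (hγ : 0 < γ)
    (Bγ : Matrix (Fin n) (Fin n) ℝ)
    (hBγ : Bγ = (1 - L) - γ • Matrix.vecMulVec sqrtd sqrtd) :
    (∃ v : Fin n → ℝ, v ≠ 0 ∧ Bγ *ᵥ v = max (1 - γ) (1 - lam2) • v) ∧
    (∀ (ν : ℝ) (v : Fin n → ℝ), v ≠ 0 → Bγ *ᵥ v = ν • v →
        ν ≤ max (1 - γ) (1 - lam2)) := by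
  -- basic facts
  have hn : 0 < n := by
    rcases hlam2ev with ⟨v, hv, -⟩
    rcases Nat.eq_zero_or_pos n with h | h
    · subst h; exact absurd (funext fun i => i.elim0) hv
    · exact h
  set s : Fin n → ℝ := fun i => Real.sqrt (d i) with hs
  have hspos : ∀ i, 0 < s i := fun i => Real.sqrt_pos.2 (hdpos i)
  have hss : ∀ i, s i * s i = d i := fun i => Real.mul_self_sqrt (hdpos i).le
  have hsqs : sqrtd = s := hsqrtd
  have hdsum : ∀ i, ∑ j, A i j = d i := by
    intro i; rw [hd]; simp [Matrix.mulVec, dotProduct]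
  have hAsym : ∀ i j, A i j = A j i := fun i j => (hsymm.apply i j).symm
  -- pointwise formula for L
  have hLapply : ∀ (v : Fin n → ℝ) (i), (L *ᵥ v) i
      = v i - (s i)⁻¹ * ∑ j, A i j * ((s j)⁻¹ * v j) := by
    intro v i
    rw [hL, Matrix.sub_mulVec, Matrix.one_mulVec]
    have : ∀ j, ((Matrix.diagonal fun i => (Real.sqrt (d i))⁻¹) * A *
        (Matrix.diagonal fun i => (Real.sqrt (d i))⁻¹)) i j = (s i)⁻¹ * A i j * (s j)⁻¹ := by
      intro j
      rw [Matrix.mul_diagonal, Matrix.diagonal_mul]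
    simp only [Pi.sub_apply, Matrix.mulVec, dotProduct, this]
    rw [Finset.mul_sum]
    congr 1
    exact Finset.sum_congr rfl fun j _ => by ring
  -- L annihilates sqrtd
  have hLsq : L *ᵥ sqrtd = 0 := by
    funext i
    rw [hLapply, hsqs]
    have : ∑ j, A i j * ((s j)⁻¹ * s j) = d i := by
      rw [← hdsum i]
      exact Finset.sum_congr rfl fun j _ => by
        rw [inv_mul_cancel₀ (hspos j).ne']; ring
    simp only [Pi.zero_apply]
    rw [this, ← hss i, inv_mul_cancel_left₀ (hspos i).ne', sub_self]
  have hdot1 : sqrtd ⬝ᵥ sqrtd = 1 := by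
    rw [hsqs]; simp only [dotProduct]
    rw [← hstoch]
    exact Finset.sum_congr rfl fun i _ => hss i
  have hLsymm : Lᵀ = L := by
    rw [hL]
    simp only [Matrix.transpose_sub, Matrix.transpose_one, Matrix.transpose_mul,
      Matrix.diagonal_transpose]
    rw [hsymm, Matrix.mul_assoc]
  have hdotL : ∀ v : Fin n → ℝ, sqrtd ⬝ᵥ (L *ᵥ v) = 0 := by
    intro v
    rw [Matrix.dotProduct_mulVec, ← Matrix.mulVec_transpose, hLsymm, hLsq]
    simp
  -- pointwise formula for Bγ
  have hBapply : ∀ v : Fin n → ℝ,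
      Bγ *ᵥ v = v - L *ᵥ v - (γ * (sqrtd ⬝ᵥ v)) • sqrtd := by
    intro v
    rw [hBγ, Matrix.sub_mulVec, Matrix.sub_mulVec, Matrix.one_mulVec,
      Matrix.smul_mulVec]
    congr 1
    funext i
    simp only [Pi.smul_apply, Matrix.mulVec, dotProduct, Matrix.vecMulVec_apply,
      smul_eq_mul]
    calc γ * ∑ j, sqrtd i * sqrtd j * v j
        = ∑ j, γ * (sqrtd j * v j) * sqrtd i := by
          rw [Finset.mul_sum]; exact Finset.sum_congr rfl fun j _ => by ring
      _ = (∑ j, γ * (sqrtd j * v j)) * sqrtd i := by rw [Finset.sum_mul]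
      _ = (γ * ∑ j, sqrtd j * v j) * sqrtd i := by rw [Finset.mul_sum]
  -- kernel of L is spanned by sqrtd
  have hker : ∀ v : Fin n → ℝ, L *ᵥ v = 0 → ∃ t : ℝ, v = t • sqrtd := by
    intro v hv0
    set u : Fin n → ℝ := fun i => v i / s i with hu
    have hvu : ∀ i, v i = s i * u i := by
      intro i; rw [hu]; dsimp only
      rw [mul_comm, div_mul_cancel₀ _ (hspos i).ne']
    have heq : ∀ i, d i * u i = ∑ j, A i j * u j := by
      intro i
      have h0 := congrFun hv0 i
      rw [hLapply] at h0
      simp only [Pi.zero_apply] at h0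
      have hsum : ∑ j, A i j * ((s j)⁻¹ * v j) = ∑ j, A i j * u j := by
        refine Finset.sum_congr rfl fun j _ => ?_
        rw [hvu j, inv_mul_cancel_left₀ (hspos j).ne']
      rw [hsum] at h0
      have h1 : v i = (s i)⁻¹ * ∑ j, A i j * u j := by linarith
      have h2 : s i * v i = ∑ j, A i j * u j := by
        rw [h1, mul_inv_cancel_left₀ (hspos i).ne']
      rw [← h2, hvu i, ← mul_assoc, hss i]
    have hzero : ∑ i, ∑ j, A i j * (u i - u j) ^ 2 = 0 := by
      have hexp : ∀ i j, A i j * (u i - u j) ^ 2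
          = A i j * u i ^ 2 - 2 * (A i j * (u i * u j)) + A i j * u j ^ 2 := by
        intro i j; ring
      simp_rw [hexp, Finset.sum_add_distrib, Finset.sum_sub_distrib]
      have hS1 : ∑ i, ∑ j, A i j * u i ^ 2 = ∑ i, d i * u i ^ 2 := by
        refine Finset.sum_congr rfl fun i _ => ?_
        rw [← Finset.sum_mul, hdsum i]
      have hS2 : ∑ i, ∑ j, 2 * (A i j * (u i * u j)) = 2 * ∑ i, d i * u i ^ 2 := by
        rw [Finset.mul_sum]
        refine Finset.sum_congr rfl fun i _ => ?_
        have : ∑ j, 2 * (A i j * (u i * u j)) = 2 * (u i * ∑ j, A i j * u j) := by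
          rw [Finset.mul_sum, Finset.mul_sum]
          exact Finset.sum_congr rfl fun j _ => by ring
        rw [this, ← heq i]; ring
      have hS3 : ∑ i, ∑ j, A i j * u j ^ 2 = ∑ i, d i * u i ^ 2 := by
        rw [Finset.sum_comm]
        refine Finset.sum_congr rfl fun j _ => ?_
        have : ∑ i, A i j * u j ^ 2 = (∑ i, A j i) * u j ^ 2 := by
          rw [Finset.sum_mul]
          exact Finset.sum_congr rfl fun i _ => by rw [hAsym i j]
        rw [this, hdsum j]
      rw [hS1, hS2, hS3]; ring
    have hterm : ∀ i j, A i j * (u i - u j) ^ 2 = 0 := by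
      have h1 := (Finset.sum_eq_zero_iff_of_nonneg (fun i _ =>
        Finset.sum_nonneg fun j _ =>
          mul_nonneg (hnonneg i j) (sq_nonneg _))).mp hzero
      intro i j
      have h2 := (Finset.sum_eq_zero_iff_of_nonneg (fun j _ =>
        mul_nonneg (hnonneg i j) (sq_nonneg _))).mp (h1 i (Finset.mem_univ i))
      exact h2 j (Finset.mem_univ j)
    have himp : ∀ i j, A i j ≠ 0 → u i = u j := by
      intro i j hA
      have := hterm i j
      rcases mul_eq_zero.mp this with h | h
      · exact absurd h hA
      · exact sub_eq_zero.mp (pow_eq_zero_iff (by norm_num)|>.mp h)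
    obtain ⟨i0⟩ : Nonempty (Fin n) := ⟨⟨0, hn⟩⟩
    have hconst : ∀ i, u i = u i0 := by
      by_contra hne
      push_neg at hne
      obtain ⟨k, hk⟩ := hne
      have hS : ({i | u i = u i0} : Set (Fin n)).Nonempty := ⟨i0, rfl⟩
      have hSc : ({i | u i = u i0} : Set (Fin n))ᶜ.Nonempty := ⟨k, hk⟩
      obtain ⟨i, hiS, j, hjS, hA⟩ := hconn _ hS hSc
      exact hjS (((himp i j hA).symm.trans hiS : u j = u i0))
    refine ⟨u i0, funext fun i => ?_⟩
    rw [hvu i, hconst i, hsqs]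
    simp [mul_comm]
  constructor
  · -- existence
    rcases le_or_gt γ lam2 with h | h
    · have hmax : max (1 - γ) (1 - lam2) = 1 - γ := max_eq_left (by linarith)
      refine ⟨sqrtd, ?_, ?_⟩
      · intro h0
        have := congrFun h0 ⟨0, hn⟩
        rw [hsqs] at this
        exact (hspos ⟨0, hn⟩).ne' this
      · rw [hmax, hBapply, hLsq, hdot1]
        funext i
        simp only [Pi.sub_apply, Pi.smul_apply, Pi.zero_apply, smul_eq_mul]
        ring
    · have hmax : max (1 - γ) (1 - lam2) = 1 - lam2 := max_eq_right (by linarith)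
      obtain ⟨v, hv, hEv⟩ := hlam2ev
      have hcv : sqrtd ⬝ᵥ v = 0 := by
        have h1 : sqrtd ⬝ᵥ (L *ᵥ v) = 0 := hdotL v
        rw [hEv, dotProduct_smul, smul_eq_mul] at h1
        exact (mul_eq_zero.mp h1).resolve_left hlam2pos.ne'
      refine ⟨v, hv, ?_⟩
      rw [hmax, hBapply, hEv, hcv]
      funext i
      simp only [Pi.sub_apply, Pi.smul_apply, smul_eq_mul, mul_zero, zero_mul]
      ring
  · -- upper bound
    intro ν v hv hEv
    rw [hBapply] at hEv
    by_cases hc : sqrtd ⬝ᵥ v = 0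
    · have hLv : L *ᵥ v = (1 - ν) • v := by
        funext i
        have := congrFun hEv i
        rw [hc] at this
        simp only [Pi.sub_apply, Pi.smul_apply, smul_eq_mul, mul_zero, zero_mul] at this ⊢
        linarith
      rcases hlam2min (1 - ν) v hv hLv with h0 | hle
      · exfalso
        obtain ⟨t, ht⟩ := hker v (by rw [hLv, h0, zero_smul])
        have hct : sqrtd ⬝ᵥ v = t := by
          rw [ht, dotProduct_smul, hdot1, smul_eq_mul, mul_one]
        have : t = 0 := by rw [← hct, hc]
        exact hv (by rw [ht, this, zero_smul])
      · have : ν ≤ 1 - lam2 := by linarith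
        exact this.trans (le_max_right _ _)
    · have hdd := congrArg (fun w => sqrtd ⬝ᵥ w) hEv
      simp only [dotProduct_sub, dotProduct_smul, hdotL, hdot1, smul_eq_mul,
        mul_one] at hdd
      -- hdd : sqrtd ⬝ᵥ v - 0 - γ * (sqrtd ⬝ᵥ v) = ν * (sqrtd ⬝ᵥ v)
      have hν : ν = 1 - γ := by
        have h1 : (1 - γ) * (sqrtd ⬝ᵥ v) = ν * (sqrtd ⬝ᵥ v) := by linarith
        exact (mul_right_cancel₀ hc h1).symm
      rw [hν]
      exact le_max_left _ _
end
end

section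
/- If γ < λ₂, then the top eigenvalue 1 − γ of B̂(γ) is simple with unique (up to sign) unit eigenvector d^{1/2} > 0; if γ > λ₂, then the top eigenvalue is 1 − λ₂ and every associated eigenvector lies in the Fiedler subspace {u : Lu = λ₂u}, hence is orthogonal to d^{1/2} and has mixed-sign entries. Thus λ₂ is the critical value of γ at which the maximizers of the Rayleigh quotient uᵀ B̂(γ) u transition from the non-dividing vector d^{1/2} to graph-dividing Fiedler vectors. -/
open Matrix Finset

noncomputable section

/-- Perron-type argument: for a connected nonnegative matrix, any vector `u` with
`d i * u i = ∑ j, A i j * u j` (where `d i = ∑ j, A i j`) is constant. -/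
lemma aux_const {n : ℕ} (A : Matrix (Fin n) (Fin n) ℝ)
    (hnonneg : ∀ i j, 0 ≤ A i j) (hconn : matrixConnected A)
    (d : Fin n → ℝ) (hd : ∀ i, d i = ∑ j, A i j)
    (hne : Nonempty (Fin n))
    (u : Fin n → ℝ) (hu : ∀ i, d i * u i = ∑ j, A i j * u j) :
    ∃ c, ∀ i, u i = c := by
  obtain ⟨i₀, -, hmax⟩ := Finset.exists_max_image Finset.univ u
    ⟨Classical.arbitrary _, Finset.mem_univ _⟩
  refine ⟨u i₀, fun i => ?_⟩
  by_contra h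
  set S : Set (Fin n) := {k | u k = u i₀} with hSdef
  have hS : S.Nonempty := ⟨i₀, rfl⟩
  have hSc : Sᶜ.Nonempty := ⟨i, h⟩
  obtain ⟨a, ha, b, hb, hab⟩ := hconn S hS hSc
  have hua : u a = u i₀ := ha
  have hsum : ∑ j, A a j * (u i₀ - u j) = 0 := by
    have h1 : ∑ j, A a j * (u i₀ - u j) = (∑ j, A a j) * u i₀ - ∑ j, A a j * u j := by
      rw [Finset.sum_mul, ← Finset.sum_sub_distrib]
      exact Finset.sum_congr rfl fun j _ => by ring
    rw [h1, ← hd a, ← hua, hu a, sub_self]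
  have hnn : ∀ j ∈ Finset.univ, (0:ℝ) ≤ A a j * (u i₀ - u j) := fun j _ =>
    mul_nonneg (hnonneg a j) (by linarith [hmax j (Finset.mem_univ j)])
  have hz := (Finset.sum_eq_zero_iff_of_nonneg hnn).1 hsum b (Finset.mem_univ b)
  rcases mul_eq_zero.1 hz with h' | h'
  · exact hab h'
  · exact hb (by simpa [hSdef] using (by linarith : u b = u i₀))

/-- If all entries of `u` are nonpositive, weights `s` are positive, and `∑ u i * s i = 0`,
then `u = 0`. -/
lemma aux_zero {n : ℕ} (u s : Fin n → ℝ) (hs : ∀ i, 0 < s i)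
    (h : ∀ i, u i ≤ 0) (hdot : ∑ i, u i * s i = 0) : u = 0 := by
  have h1 : ∀ i ∈ Finset.univ, (0:ℝ) ≤ -(u i * s i) := fun i _ => by
    have := mul_nonpos_of_nonpos_of_nonneg (h i) (hs i).le
    linarith
  have h2 : ∑ i, -(u i * s i) = 0 := by
    rw [Finset.sum_neg_distrib, hdot, neg_zero]
  have hz := (Finset.sum_eq_zero_iff_of_nonneg h1).1 h2
  funext i
  have h3 : u i * s i = 0 := by linarith [hz i (Finset.mem_univ i)]
  have := (mul_eq_zero.1 h3).resolve_right (ne_of_gt (hs i))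
  simpa using this

lemma aux_mixed {n : ℕ} (u s : Fin n → ℝ) (hs : ∀ i, 0 < s i) (hu0 : u ≠ 0)
    (hdot : ∑ i, u i * s i = 0) : (∃ i, 0 < u i) ∧ (∃ j, u j < 0) := by
  constructor
  · by_contra h; push_neg at h
    exact hu0 (aux_zero u s hs h hdot)
  · by_contra h; push_neg at h
    have hneg : (fun i => -u i) = 0 := by
      refine aux_zero (fun i => -u i) s hs (fun i => by simpa using h i) ?_
      simp only [neg_mul, Finset.sum_neg_distrib, hdot, neg_zero]
    apply hu0
    funext i
    have := congrFun hneg i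
    simpa using this

/-- Critical transition at the Fiedler value. If `γ < λ₂` the top eigenvalue
`1 − γ` of `B̂(γ)` is simple with (positive) eigenvector `d^{1/2}`; if `γ > λ₂` the top
eigenvalue is `1 − λ₂` and every associated eigenvector is in the Fiedler subspace, hence
orthogonal to `d^{1/2}` and with mixed-sign entries. -/
theorem fiedler_critical_transition {n : ℕ}
    (A : Matrix (Fin n) (Fin n) ℝ)
    (hsymm : A.IsSymm) (hnonneg : ∀ i j, 0 ≤ A i j)
    (hconn : matrixConnected A)
    (d : Fin n → ℝ) (hd : d = A *ᵥ (fun _ => 1))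
    (hstoch : ∑ i, d i = 1) (hdpos : ∀ i, 0 < d i)
    (sqrtd : Fin n → ℝ) (hsqrtd : sqrtd = fun i => Real.sqrt (d i))
    (L : Matrix (Fin n) (Fin n) ℝ)
    (hL : L = 1 - (Matrix.diagonal fun i => (Real.sqrt (d i))⁻¹) * A *
        (Matrix.diagonal fun i => (Real.sqrt (d i))⁻¹))
    (lam2 : ℝ)
    (hlam2pos : 0 < lam2)
    (hlam2ev : ∃ v : Fin n → ℝ, v ≠ 0 ∧ L *ᵥ v = lam2 • v)
    (hlam2min : ∀ (μ : ℝ) (v : Fin n → ℝ), v ≠ 0 → L *ᵥ v = μ • v →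
        μ = 0 ∨ lam2 ≤ μ)
    (γ : ℝ) (hγ : 0 < γ)
    (Bγ : Matrix (Fin n) (Fin n) ℝ)
    (hBγ : Bγ = (1 - L) - γ • Matrix.vecMulVec sqrtd sqrtd) :
    (γ < lam2 →
      Bγ *ᵥ sqrtd = (1 - γ) • sqrtd ∧ (∀ i, 0 < sqrtd i) ∧
      (∀ (ν : ℝ) (v : Fin n → ℝ), v ≠ 0 → Bγ *ᵥ v = ν • v → ν ≤ 1 - γ) ∧
      (∀ v : Fin n → ℝ, Bγ *ᵥ v = (1 - γ) • v → ∃ c : ℝ, v = c • sqrtd)) ∧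
    (lam2 < γ →
      (∃ v : Fin n → ℝ, v ≠ 0 ∧ Bγ *ᵥ v = (1 - lam2) • v) ∧
      (∀ (ν : ℝ) (v : Fin n → ℝ), v ≠ 0 → Bγ *ᵥ v = ν • v → ν ≤ 1 - lam2) ∧
      (∀ u : Fin n → ℝ, u ≠ 0 → Bγ *ᵥ u = (1 - lam2) • u →
        L *ᵥ u = lam2 • u ∧ u ⬝ᵥ sqrtd = 0 ∧
          (∃ i, 0 < u i) ∧ (∃ j, u j < 0))) := by
  -- basic facts
  have hne : Nonempty (Fin n) := by
    rcases Nat.eq_zero_or_pos n with h | h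
    · subst h; simp at hstoch
    · exact ⟨⟨0, h⟩⟩
  have hsne : ∀ i, Real.sqrt (d i) ≠ 0 := fun i => ne_of_gt (Real.sqrt_pos.2 (hdpos i))
  have hsd_pos : ∀ i, 0 < sqrtd i := fun i => by
    rw [hsqrtd]; exact Real.sqrt_pos.2 (hdpos i)
  have hd' : ∀ i, d i = ∑ j, A i j := fun i => by
    rw [hd]; simp [Matrix.mulVec, dotProduct]
  have key : ∀ x : ℝ, 0 < x → (Real.sqrt x)⁻¹ * x = Real.sqrt x := fun x hx => by
    rw [inv_mul_eq_div, div_eq_iff (ne_of_gt (Real.sqrt_pos.2 hx))]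
    exact (Real.mul_self_sqrt hx.le).symm
  have hdot1 : sqrtd ⬝ᵥ sqrtd = 1 := by
    rw [hsqrtd]
    simp only [dotProduct]
    rw [← hstoch]
    exact Finset.sum_congr rfl fun i _ => Real.mul_self_sqrt (hdpos i).le
  have hPv : ∀ v : Fin n → ℝ, (Matrix.vecMulVec sqrtd sqrtd) *ᵥ v = (sqrtd ⬝ᵥ v) • sqrtd := by
    intro v
    funext i
    simp only [Matrix.vecMulVec, Matrix.mulVec, dotProduct, Pi.smul_apply,
      smul_eq_mul, Matrix.of_apply, Finset.sum_mul]
    exact Finset.sum_congr rfl fun j _ => by ring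
  have hDAD : ∀ v : Fin n → ℝ,
      ((Matrix.diagonal fun i => (Real.sqrt (d i))⁻¹) * A *
        (Matrix.diagonal fun i => (Real.sqrt (d i))⁻¹)) *ᵥ v
      = (Matrix.diagonal fun i => (Real.sqrt (d i))⁻¹) *ᵥ
          (A *ᵥ ((Matrix.diagonal fun i => (Real.sqrt (d i))⁻¹) *ᵥ v)) := by
    intro v; rw [Matrix.mulVec_mulVec, Matrix.mulVec_mulVec]
  have hDs : (Matrix.diagonal fun i => (Real.sqrt (d i))⁻¹) *ᵥ sqrtd = (fun _ => 1) := by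
    funext i
    rw [Matrix.mulVec_diagonal, hsqrtd]
    exact inv_mul_cancel₀ (hsne i)
  have hLd : L *ᵥ sqrtd = 0 := by
    rw [hL, Matrix.sub_mulVec, Matrix.one_mulVec, hDAD, hDs, ← hd]
    funext i
    simp only [Pi.sub_apply, Pi.zero_apply, Matrix.mulVec_diagonal, hsqrtd]
    rw [key (d i) (hdpos i), sub_self]
  have hLsymm : Lᵀ = L := by
    rw [hL]
    rw [Matrix.transpose_sub, Matrix.transpose_one, Matrix.transpose_mul,
      Matrix.transpose_mul, Matrix.diagonal_transpose, hsymm.eq, mul_assoc]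
  have hdotL : ∀ v : Fin n → ℝ, sqrtd ⬝ᵥ (L *ᵥ v) = 0 := by
    intro v
    rw [Matrix.dotProduct_mulVec, ← Matrix.mulVec_transpose, hLsymm, hLd,
      zero_dotProduct]
  have hBv : ∀ v : Fin n → ℝ, Bγ *ᵥ v = v - L *ᵥ v - (γ * (sqrtd ⬝ᵥ v)) • sqrtd := by
    intro v
    rw [hBγ, Matrix.sub_mulVec, Matrix.sub_mulVec, Matrix.one_mulVec,
      Matrix.smul_mulVec, hPv v, smul_smul]
  -- kernel of L is spanned by sqrtd
  have hker : ∀ v : Fin n → ℝ, L *ᵥ v = 0 → ∃ c : ℝ, v = c • sqrtd := by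
    intro v hv
    set u : Fin n → ℝ := fun i => (Real.sqrt (d i))⁻¹ * v i with hu_def
    have hDv : (Matrix.diagonal fun i => (Real.sqrt (d i))⁻¹) *ᵥ v = u := by
      funext i; rw [Matrix.mulVec_diagonal]
    rw [hL, Matrix.sub_mulVec, Matrix.one_mulVec, sub_eq_zero] at hv
    rw [hDAD, hDv] at hv
    have hu : ∀ i, d i * u i = ∑ j, A i j * u j := by
      intro i
      have h1 := congrFun hv i
      rw [Matrix.mulVec_diagonal] at h1
      have h2 : (A *ᵥ u) i = Real.sqrt (d i) * v i := by
        rw [h1, ← mul_assoc, mul_inv_cancel₀ (hsne i), one_mul]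
      have h3 : ∑ j, A i j * u j = (A *ᵥ u) i := by
        simp [Matrix.mulVec, dotProduct]
      rw [h3, h2]
      show d i * ((Real.sqrt (d i))⁻¹ * v i) = _
      rw [← mul_assoc, mul_comm (d i), key (d i) (hdpos i)]
    obtain ⟨c, hc⟩ := aux_const A hnonneg hconn d hd' hne u hu
    refine ⟨c, funext fun i => ?_⟩
    have h4 : v i = Real.sqrt (d i) * u i :=
      (mul_inv_cancel_left₀ (hsne i) (v i)).symm
    rw [h4, hc i]
    simp [hsqrtd, mul_comm]
  -- eigenvalue dichotomy for Bγ
  have heig : ∀ (ν : ℝ) (v : Fin n → ℝ), Bγ *ᵥ v = ν • v →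
      ν = 1 - γ ∨ (sqrtd ⬝ᵥ v = 0 ∧ L *ᵥ v = (1 - ν) • v) := by
    intro ν v hv
    have h1 : sqrtd ⬝ᵥ (Bγ *ᵥ v) = sqrtd ⬝ᵥ (ν • v) := by rw [hv]
    rw [hBv v, dotProduct_sub, dotProduct_sub, hdotL v,
      dotProduct_smul, dotProduct_smul, hdot1, smul_eq_mul,
      smul_eq_mul, mul_one] at h1
    have hdd : (1 - γ - ν) * (sqrtd ⬝ᵥ v) = 0 := by linear_combination h1
    rcases eq_or_ne ν (1 - γ) with h | h
    · exact Or.inl h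
    · have hsv : sqrtd ⬝ᵥ v = 0 := by
        rcases mul_eq_zero.1 hdd with h' | h'
        · exact absurd (by linarith : ν = 1 - γ) h
        · exact h'
      refine Or.inr ⟨hsv, ?_⟩
      have h5 := hv
      rw [hBv v, hsv, mul_zero, zero_smul, sub_zero] at h5
      funext i
      have h6 := congrFun h5 i
      simp only [Pi.sub_apply, Pi.smul_apply, smul_eq_mul] at h6 ⊢
      ring_nf at h6 ⊢
      linarith
  -- eigenvector of L orthogonal to sqrtd has eigenvalue ≥ lam2
  have hperp : ∀ (ν : ℝ) (v : Fin n → ℝ), v ≠ 0 → sqrtd ⬝ᵥ v = 0 →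
      L *ᵥ v = (1 - ν) • v → lam2 ≤ 1 - ν := by
    intro ν v hv0 hsv hLv
    rcases hlam2min (1 - ν) v hv0 hLv with h | h
    · exfalso
      have hLv0 : L *ᵥ v = 0 := by rw [hLv, h, zero_smul]
      obtain ⟨c, hc⟩ := hker v hLv0
      rw [hc, dotProduct_smul, hdot1, smul_eq_mul, mul_one] at hsv
      exact hv0 (by rw [hc, hsv, zero_smul])
    · exact h
  constructor
  · -- γ < lam2
    intro hγl
    have hBsd : Bγ *ᵥ sqrtd = (1 - γ) • sqrtd := by
      rw [hBv sqrtd, hLd, hdot1, mul_one, sub_zero, sub_smul, one_smul]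
    refine ⟨hBsd, hsd_pos, ?_, ?_⟩
    · intro ν v hv0 hv
      rcases heig ν v hv with h | ⟨hsv, hLv⟩
      · exact le_of_eq h
      · have := hperp ν v hv0 hsv hLv; linarith
    · intro v hv
      refine ⟨sqrtd ⬝ᵥ v, ?_⟩
      set c : ℝ := sqrtd ⬝ᵥ v with hc
      set w : Fin n → ℝ := v - c • sqrtd with hw
      have hsw : sqrtd ⬝ᵥ w = 0 := by
        rw [hw, dotProduct_sub, dotProduct_smul, hdot1, smul_eq_mul,
          mul_one, ← hc, sub_self]
      have hBw : Bγ *ᵥ w = (1 - γ) • w := by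
        rw [hw, Matrix.mulVec_sub, Matrix.mulVec_smul, hv, hBsd, smul_sub, smul_comm]
      by_cases hw0 : w = 0
      · rw [hw, sub_eq_zero] at hw0
        exact hw0
      · exfalso
        rw [hBv w, hsw, mul_zero, zero_smul, sub_zero] at hBw
        have hLw : L *ᵥ w = γ • w := by
          funext i
          have h6 := congrFun hBw i
          simp only [Pi.sub_apply, Pi.smul_apply, smul_eq_mul] at h6 ⊢
          ring_nf at h6 ⊢
          linarith
        rcases hlam2min γ w hw0 hLw with h | h
        · exact absurd h (ne_of_gt hγ)
        · linarith
  · -- lam2 < γ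
    intro hγg
    obtain ⟨v, hv0, hLv⟩ := hlam2ev
    have hsv : sqrtd ⬝ᵥ v = 0 := by
      have h1 : sqrtd ⬝ᵥ (L *ᵥ v) = lam2 * (sqrtd ⬝ᵥ v) := by
        rw [hLv, dotProduct_smul, smul_eq_mul]
      rw [hdotL v] at h1
      have := mul_eq_zero.1 h1.symm
      exact this.resolve_left (ne_of_gt hlam2pos)
    have hBveq : Bγ *ᵥ v = (1 - lam2) • v := by
      rw [hBv v, hsv, mul_zero, zero_smul, sub_zero, hLv, sub_smul, one_smul]
    refine ⟨⟨v, hv0, hBveq⟩, ?_, ?_⟩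
    · intro ν w hw0 hw
      rcases heig ν w hw with h | ⟨hsw, hLw⟩
      · linarith
      · have := hperp ν w hw0 hsw hLw; linarith
    · intro u hu0 hBu
      rcases heig (1 - lam2) u hBu with h | ⟨hsu, hLu⟩
      · exfalso; have : γ = lam2 := by linarith
        linarith
      · have hLu' : L *ᵥ u = lam2 • u := by
          rw [hLu]; norm_num
        have hud : u ⬝ᵥ sqrtd = 0 := by
          rw [dotProduct_comm]; exact hsu
        have hdot0 : ∑ i, u i * sqrtd i = 0 := hud
        obtain ⟨hp, hn⟩ := aux_mixed u sqrtd hsd_pos hu0 hdot0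
        exact ⟨hLu', hud, hp, hn⟩
end
end

section
/- For the k-dimensional hypercube graph (k > 2), the Fiedler value of the normalized Laplacian equals 2/k with multiplicity k, and the modularity value at the cut into two (k−1)-dimensional subcubes equals (k − 2)/(2k), which is strictly positive; hence modularity maximization at γ = 1 favors this cut over the all-in-one configuration. -/
open Matrix Finset

noncomputable section

namespace HypercubeAux

variable {k : ℕ}

/-- sign of a coordinate: `1` if true, `-1` if false. -/
def sgn (x : Fin k → Bool) (j : Fin k) : ℝ := if x j then 1 else -1

/-- Fourier character on the hypercube. -/
def chi (S : Finset (Fin k)) (x : Fin k → Bool) : ℝ := ∏ j ∈ S, sgn x j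

/-- flip one coordinate. -/
def flip (x : Fin k → Bool) (j : Fin k) : Fin k → Bool := Function.update x j (!x j)

lemma sgn_sq (x : Fin k → Bool) (j : Fin k) : sgn x j * sgn x j = 1 := by
  unfold sgn; split <;> norm_num

lemma sgn_flip_self (x : Fin k → Bool) (j : Fin k) : sgn (flip x j) j = - sgn x j := by
  unfold sgn flip
  rw [Function.update_self]
  cases x j <;> simp

lemma sgn_flip_ne (x : Fin k → Bool) {i j : Fin k} (h : i ≠ j) : sgn (flip x j) i = sgn x i := by
  unfold sgn flip
  rw [Function.update_of_ne h]

lemma flip_ne (x : Fin k → Bool) (j : Fin k) : flip x j ≠ x := by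
  intro h
  have := congrFun h j
  simp [flip, Function.update_self] at this

lemma flip_flip (x : Fin k → Bool) (j : Fin k) : flip (flip x j) j = x := by
  funext i
  by_cases h : i = j
  · subst h; simp [flip, Function.update_self]
  · simp [flip, Function.update_of_ne h]

lemma flip_inj (x : Fin k → Bool) : Function.Injective (flip x) := by
  intro i j h
  by_contra hne
  have := congrFun h i
  rw [show flip x i i = !x i from Function.update_self _ _ _,
      show flip x j i = x i from Function.update_of_ne hne _ _] at this
  revert this; cases x i <;> decide

lemma chi_flip_mem {S : Finset (Fin k)} {j : Fin k} (hj : j ∈ S) (x : Fin k → Bool) :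
    chi S (flip x j) = - chi S x := by
  unfold chi
  rw [← Finset.mul_prod_erase S _ hj, ← Finset.mul_prod_erase S (sgn x) hj,
    sgn_flip_self, Finset.prod_congr rfl (fun i hi => sgn_flip_ne x (Finset.ne_of_mem_erase hi)),
    neg_mul]

lemma chi_flip_not_mem {S : Finset (Fin k)} {j : Fin k} (hj : j ∉ S) (x : Fin k → Bool) :
    chi S (flip x j) = chi S x := by
  unfold chi
  exact Finset.prod_congr rfl fun i hi => sgn_flip_ne x (fun h => hj (h ▸ hi))

lemma card_one_iff (x y : Fin k → Bool) :
    (univ.filter fun j => x j ≠ y j).card = 1 ↔ ∃ j, y = flip x j := by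
  constructor
  · intro h
    obtain ⟨a, ha⟩ := Finset.card_eq_one.1 h
    refine ⟨a, funext fun i => ?_⟩
    by_cases hi : i = a
    · subst hi
      have : x i ≠ y i := by
        have := Finset.mem_singleton_self i
        rw [← ha, Finset.mem_filter] at this
        exact this.2
      rw [show flip x i i = !x i from Function.update_self _ _ _]
      revert this; cases x i <;> cases y i <;> decide
    · have : i ∉ univ.filter fun j => x j ≠ y j := by rw [ha]; simp [hi]
      rw [Finset.mem_filter] at this
      push_neg at this
      rw [show flip x a i = x i from Function.update_of_ne hi _ _]
      exact (this (Finset.mem_univ i)).symm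
  · rintro ⟨j, rfl⟩
    rw [Finset.card_eq_one]
    refine ⟨j, Finset.ext fun i => ?_⟩
    simp only [Finset.mem_filter, Finset.mem_univ, true_and, Finset.mem_singleton]
    constructor
    · intro h
      by_contra hij
      exact h (Function.update_of_ne hij _ _).symm
    · rintro rfl
      rw [show flip x i i = !x i from Function.update_self _ _ _]
      cases x i <;> decide

lemma sum_neighbors (x : Fin k → Bool) (f : (Fin k → Bool) → ℝ) :
    (∑ y, if (univ.filter fun j => x j ≠ y j).card = 1 then f y else 0)
      = ∑ j, f (flip x j) := by
  rw [← Finset.sum_filter]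
  have himg : (univ.filter fun y => (univ.filter fun j => x j ≠ y j).card = 1)
      = Finset.image (flip x) univ := by
    ext y
    simp only [Finset.mem_filter, Finset.mem_univ, true_and, Finset.mem_image]
    rw [card_one_iff]
    constructor
    · rintro ⟨j, rfl⟩; exact ⟨j, rfl⟩
    · rintro ⟨j, rfl⟩; exact ⟨j, rfl⟩
  rw [himg, Finset.sum_image (fun a _ b _ h => flip_inj x h)]

lemma chi_sq (S : Finset (Fin k)) (x : Fin k → Bool) : chi S x * chi S x = 1 := by
  unfold chi
  rw [← Finset.prod_mul_distrib]
  exact Finset.prod_eq_one fun j _ => sgn_sq x j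

lemma sum_chi_eq_zero {S : Finset (Fin k)} (hS : S.Nonempty) :
    ∑ x : Fin k → Bool, chi S x = 0 := by
  obtain ⟨j, hj⟩ := hS
  refine Finset.sum_involution (fun x _ => flip x j) (fun x _ => ?_)
    (fun x _ _ => flip_ne x j) (fun x _ => Finset.mem_univ _) (fun x _ => flip_flip x j)
  rw [chi_flip_mem hj]; ring

lemma sum_chi_mul_chi (x y : Fin k → Bool) :
    ∑ S : Finset (Fin k), chi S x * chi S y = if x = y then (2:ℝ)^k else 0 := by
  have h1 : ∀ S : Finset (Fin k), chi S x * chi S y = ∏ j ∈ S, (sgn x j * sgn y j) := by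
    intro S; unfold chi; rw [Finset.prod_mul_distrib]
  simp_rw [h1]
  have h2 : ∑ S : Finset (Fin k), ∏ j ∈ S, (sgn x j * sgn y j)
      = ∏ j : Fin k, (sgn x j * sgn y j + 1) := by
    rw [Finset.prod_add]
    rw [← Finset.powerset_univ]
    exact Finset.sum_congr rfl fun t _ => by simp
  rw [h2]
  by_cases hxy : x = y
  · subst hxy
    simp only [if_pos rfl]
    rw [Finset.prod_congr rfl fun j _ => by rw [sgn_sq]]
    norm_num
  · rw [if_neg hxy]
    have : ∃ j, x j ≠ y j := by
      by_contra h
      push_neg at h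
      exact hxy (funext h)
    obtain ⟨j, hj⟩ := this
    refine Finset.prod_eq_zero (Finset.mem_univ j) ?_
    unfold sgn
    revert hj
    cases x j <;> cases y j <;> simp

lemma inversion (w : (Fin k → Bool) → ℝ) (x : Fin k → Bool) :
    ∑ S : Finset (Fin k), (∑ y, w y * chi S y) * chi S x = 2^k * w x := by
  simp_rw [Finset.sum_mul, mul_assoc]
  rw [Finset.sum_comm]
  have : ∀ y, ∑ S : Finset (Fin k), w y * (chi S y * chi S x)
      = w y * (if y = x then (2:ℝ)^k else 0) := by
    intro y
    rw [← Finset.mul_sum, sum_chi_mul_chi]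
  simp_rw [this]
  simp [Finset.sum_ite_eq, mul_comm]

/-- The eigenvalue computation for the adjacency matrix. -/
lemma A_mulVec_chi (S : Finset (Fin k))
    (A : Matrix (Fin k → Bool) (Fin k → Bool) ℝ)
    (hA : A = Matrix.of fun x y =>
        if (Finset.univ.filter fun j => x j ≠ y j).card = 1 then
          ((k : ℝ) * 2 ^ k)⁻¹ else 0) :
    A *ᵥ chi S = ((((k:ℝ) - 2 * S.card) * ((k : ℝ) * 2 ^ k)⁻¹)) • chi S := by
  subst hA
  funext x
  show (∑ y, (if (univ.filter fun j => x j ≠ y j).card = 1 then ((k:ℝ) * 2 ^ k)⁻¹ else 0)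
      * chi S y) = _
  have h1 : ∀ y : Fin k → Bool,
      (if (univ.filter fun j => x j ≠ y j).card = 1 then ((k:ℝ) * 2 ^ k)⁻¹ else 0) * chi S y
      = (if (univ.filter fun j => x j ≠ y j).card = 1 then ((k:ℝ) * 2 ^ k)⁻¹ * chi S y else 0) := by
    intro y; split <;> simp
  simp_rw [h1]
  rw [sum_neighbors x (fun y => ((k:ℝ) * 2 ^ k)⁻¹ * chi S y)]
  have h2 : ∀ j : Fin k, chi S (flip x j) = (if j ∈ S then (-1:ℝ) else 1) * chi S x := by
    intro j
    by_cases hj : j ∈ S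
    · rw [chi_flip_mem hj, if_pos hj]; ring
    · rw [chi_flip_not_mem hj, if_neg hj]; ring
  simp_rw [h2]
  rw [← Finset.mul_sum, ← Finset.sum_mul]
  have h3 : ∑ j : Fin k, (if j ∈ S then (-1:ℝ) else 1) = (k:ℝ) - 2 * S.card := by
    have : ∀ j : Fin k, (if j ∈ S then (-1:ℝ) else 1)
        = (if j ∈ S then (-2:ℝ) else 0) + 1 := by
      intro j; split <;> norm_num
    simp_rw [this]
    rw [Finset.sum_add_distrib, Finset.sum_ite_mem, Finset.univ_inter, Finset.sum_const,
      Finset.sum_const, Finset.card_univ]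
    simp only [nsmul_eq_mul, Fintype.card_fin]
    ring
  rw [h3]
  show ((k:ℝ) * 2 ^ k)⁻¹ * (((k:ℝ) - 2 * S.card) * chi S x) = _
  simp only [Pi.smul_apply, smul_eq_mul]
  ring

end HypercubeAux

open HypercubeAux

/-- For the k-dimensional hypercube (k > 2, adjacency scaled to unit
volume), the Fiedler value of the normalized Laplacian equals `2/k` with multiplicity `k`
(the eigenspace is spanned by the k coordinate-cut vectors), and the modularity value at
the cut into two (k−1)-dimensional subcubes equals `(k − 2)/(2k) > 0`. -/
theorem hypercube_fiedler_and_cut {k : ℕ} (hk : 2 < k)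
    (A : Matrix (Fin k → Bool) (Fin k → Bool) ℝ)
    (hA : A = Matrix.of fun x y =>
        if (Finset.univ.filter fun j => x j ≠ y j).card = 1 then
          ((k : ℝ) * 2 ^ k)⁻¹ else 0)
    (d : (Fin k → Bool) → ℝ) (hd : d = A *ᵥ (fun _ => 1))
    (L : Matrix (Fin k → Bool) (Fin k → Bool) ℝ)
    (hL : L = 1 - (Matrix.diagonal fun x => (Real.sqrt (d x))⁻¹) * A *
        (Matrix.diagonal fun x => (Real.sqrt (d x))⁻¹))
    (v : Fin k → (Fin k → Bool) → ℝ)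
    (hv : v = fun j x => if x j then (1 : ℝ) else -1)
    (s : (Fin k → Bool) → ℝ)
    (hs : s = v ⟨0, by omega⟩) :
    -- 2/k is an eigenvalue with the k independent coordinate-cut eigenvectors:
    (∀ j : Fin k, L *ᵥ v j = ((2 : ℝ) / k) • v j) ∧
    -- multiplicity exactly k: the eigenspace is spanned by them:
    (∀ w : (Fin k → Bool) → ℝ, L *ᵥ w = ((2 : ℝ) / k) • w →
        ∃ c : Fin k → ℝ, w = ∑ j, c j • v j) ∧
    -- 2/k is the Fiedler value (smallest nonzero eigenvalue):
    (∀ (μ : ℝ) (w : (Fin k → Bool) → ℝ), w ≠ 0 → L *ᵥ w = μ • w →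
        μ = 0 ∨ (2 : ℝ) / k ≤ μ) ∧
    -- modularity value at the subcube cut:
    (1 / 2 : ℝ) * (s ⬝ᵥ ((A - Matrix.vecMulVec d d) *ᵥ s)) =
        ((k : ℝ) - 2) / (2 * k) ∧
    (0 : ℝ) < ((k : ℝ) - 2) / (2 * k) := by
  have hk0 : (k:ℝ) ≠ 0 := by positivity
  have hkpos : (0:ℝ) < k := by positivity
  have h2k : (0:ℝ) < 2 ^ k := by positivity
  have h2k' : ((2:ℝ) ^ k) ≠ 0 := ne_of_gt h2k
  -- the degree is constant (2^k)⁻¹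
  have hdconst : d = fun _ => ((2:ℝ)^k)⁻¹ := by
    rw [hd]
    have hone : (fun _ : Fin k → Bool => (1:ℝ)) = chi (∅ : Finset (Fin k)) := by
      funext x; simp [chi]
    rw [hone, A_mulVec_chi ∅ A hA]
    funext x
    simp only [Pi.smul_apply, smul_eq_mul, chi, Finset.prod_empty, Finset.card_empty,
      Nat.cast_zero]
    field_simp
    ring
  -- L = 1 - 2^k • A
  have hLA : L = 1 - ((2:ℝ)^k) • A := by
    rw [hL, hdconst]
    congr 1
    have hf : ((Real.sqrt (((2:ℝ)^k)⁻¹))⁻¹) * ((Real.sqrt (((2:ℝ)^k)⁻¹))⁻¹) = (2:ℝ)^k := by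
      rw [← mul_inv, Real.mul_self_sqrt (by positivity)]
      simp
    ext x y
    rw [Matrix.mul_diagonal, Matrix.diagonal_mul]
    simp only [Matrix.smul_apply, smul_eq_mul]
    rw [show (Real.sqrt (((2:ℝ)^k)⁻¹))⁻¹ * A x y * (Real.sqrt (((2:ℝ)^k)⁻¹))⁻¹
        = ((Real.sqrt (((2:ℝ)^k)⁻¹))⁻¹ * (Real.sqrt (((2:ℝ)^k)⁻¹))⁻¹) * A x y from by ring, hf]
  -- eigenvalues of L on characters
  have hLchi : ∀ S : Finset (Fin k), L *ᵥ chi S = ((2 * (S.card:ℝ)) / k) • chi S := by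
    intro S
    rw [hLA, Matrix.sub_mulVec, Matrix.one_mulVec, Matrix.smul_mulVec, A_mulVec_chi S A hA]
    funext x
    simp only [Pi.sub_apply, Pi.smul_apply, smul_eq_mul]
    field_simp
    ring
  -- v j is the character of the singleton {j}
  have hvchi : ∀ j : Fin k, v j = chi {j} := by
    intro j; rw [hv]
    funext x
    simp [chi, sgn]
  -- Part 1
  have part1 : ∀ j : Fin k, L *ᵥ v j = ((2 : ℝ) / k) • v j := by
    intro j
    rw [hvchi j, hLchi {j}]
    norm_num
  -- symmetry of L
  have hLsymm : ∀ x y, L x y = L y x := by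
    intro x y
    rw [hLA, hA]
    simp only [Matrix.sub_apply, Matrix.smul_apply, Matrix.of_apply, smul_eq_mul]
    have hfilter : (univ.filter fun j => x j ≠ y j) = (univ.filter fun j => y j ≠ x j) := by
      apply Finset.filter_congr; intro j _; simp [ne_comm]
    rw [hfilter]
    congr 1
    by_cases hxy : x = y
    · subst hxy; rfl
    · rw [Matrix.one_apply_ne hxy, Matrix.one_apply_ne (Ne.symm hxy)]
  have hdot : ∀ (u w : (Fin k → Bool) → ℝ), (L *ᵥ w) ⬝ᵥ u = w ⬝ᵥ (L *ᵥ u) := by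
    intro u w
    simp only [dotProduct, Matrix.mulVec]
    simp_rw [Finset.sum_mul, Finset.mul_sum]
    rw [Finset.sum_comm]
    exact Finset.sum_congr rfl fun y _ => Finset.sum_congr rfl fun x _ => by
      rw [hLsymm x y]; ring
  -- coefficient equations from eigenvector equations
  have hcoef : ∀ (μ : ℝ) (w : (Fin k → Bool) → ℝ), L *ᵥ w = μ • w → ∀ S : Finset (Fin k),
      μ * (w ⬝ᵥ chi S) = (2 * (S.card:ℝ) / k) * (w ⬝ᵥ chi S) := by
    intro μ w hw S
    have h1 : (L *ᵥ w) ⬝ᵥ chi S = μ * (w ⬝ᵥ chi S) := by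
      rw [hw, smul_dotProduct]; simp
    have h2 : w ⬝ᵥ (L *ᵥ chi S) = (2 * (S.card:ℝ) / k) * (w ⬝ᵥ chi S) := by
      rw [hLchi S, dotProduct_smul]; simp
    rw [← h1, hdot, h2]
  -- Fourier inversion restated with dot products
  have hinv : ∀ (w : (Fin k → Bool) → ℝ) (x : Fin k → Bool),
      w x = ((2:ℝ)^k)⁻¹ * ∑ S : Finset (Fin k), (w ⬝ᵥ chi S) * chi S x := by
    intro w x
    have h := inversion w x
    rw [show (∑ S : Finset (Fin k), (w ⬝ᵥ chi S) * chi S x)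
        = ∑ S : Finset (Fin k), (∑ y, w y * chi S y) * chi S x from rfl, h]
    field_simp
  -- Part 2
  have part2 : ∀ w : (Fin k → Bool) → ℝ, L *ᵥ w = ((2 : ℝ) / k) • w →
      ∃ c : Fin k → ℝ, w = ∑ j, c j • v j := by
    intro w hw
    have hc := hcoef ((2:ℝ)/k) w hw
    have hzero : ∀ S : Finset (Fin k), S.card ≠ 1 → w ⬝ᵥ chi S = 0 := by
      intro S hS
      by_contra hne
      have h := mul_right_cancel₀ hne (hc S)
      apply hS
      field_simp at h
      exact_mod_cast h.symm
    refine ⟨fun j => ((2:ℝ)^k)⁻¹ * (w ⬝ᵥ chi {j}), funext fun x => ?_⟩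
    rw [hinv w x, Finset.sum_apply]
    simp only [Pi.smul_apply, smul_eq_mul, hvchi]
    have hsplit : ∑ S : Finset (Fin k), (w ⬝ᵥ chi S) * chi S x
        = ∑ j : Fin k, (w ⬝ᵥ chi {j}) * chi {j} x := by
      rw [← Finset.sum_filter_add_sum_filter_not univ (fun S => S.card = 1)]
      have hz : ∑ S ∈ univ.filter (fun S : Finset (Fin k) => ¬ S.card = 1),
          (w ⬝ᵥ chi S) * chi S x = 0 := by
        apply Finset.sum_eq_zero
        intro S hSm
        rw [Finset.mem_filter] at hSm
        rw [hzero S hSm.2, zero_mul]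
      rw [hz, add_zero]
      have himg : univ.filter (fun S : Finset (Fin k) => S.card = 1)
          = Finset.image (fun j => ({j} : Finset (Fin k))) univ := by
        ext S
        simp only [Finset.mem_filter, Finset.mem_univ, true_and, Finset.mem_image]
        rw [Finset.card_eq_one]
        constructor
        · rintro ⟨a, rfl⟩; exact ⟨a, rfl⟩
        · rintro ⟨a, rfl⟩; exact ⟨a, rfl⟩
      rw [himg, Finset.sum_image (fun a _ b _ h => Finset.singleton_injective h)]
    rw [hsplit, Finset.mul_sum]
    exact Finset.sum_congr rfl fun j _ => by ring
  -- Part 3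
  have part3 : ∀ (μ : ℝ) (w : (Fin k → Bool) → ℝ), w ≠ 0 → L *ᵥ w = μ • w →
      μ = 0 ∨ (2 : ℝ) / k ≤ μ := by
    intro μ w hwne hw
    have hc := hcoef μ w hw
    have hex : ∃ S : Finset (Fin k), w ⬝ᵥ chi S ≠ 0 := by
      by_contra h
      push_neg at h
      apply hwne
      funext x
      rw [hinv w x, Finset.sum_eq_zero fun S _ => by rw [h S, zero_mul]]
      simp
    obtain ⟨S, hS⟩ := hex
    have hmu := mul_right_cancel₀ hS (hc S)
    by_cases h0 : S.card = 0
    · left; rw [hmu, h0]; simp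
    · right
      rw [hmu]
      have h1 : (1:ℝ) ≤ (S.card:ℝ) := by
        exact_mod_cast Nat.one_le_iff_ne_zero.2 h0
      gcongr
      linarith
  refine ⟨part1, part2, part3, ?_, ?_⟩
  · -- modularity value at the subcube cut
    have hdv : Matrix.vecMulVec d d *ᵥ s = 0 := by
      funext x
      show ∑ y, Matrix.vecMulVec d d x y * s y = 0
      simp only [Matrix.vecMulVec_apply, hdconst, hs, hvchi]
      rw [show (∑ y, ((2:ℝ)^k)⁻¹ * ((2:ℝ)^k)⁻¹ * chi {(⟨0, by omega⟩ : Fin k)} y)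
          = ((2:ℝ)^k)⁻¹ * ((2:ℝ)^k)⁻¹ * ∑ y, chi {(⟨0, by omega⟩ : Fin k)} y from
          (Finset.mul_sum _ _ _).symm]
      rw [sum_chi_eq_zero (Finset.singleton_nonempty _), mul_zero]
    rw [Matrix.sub_mulVec, hdv, sub_zero]
    have hsA : A *ᵥ s = (((k:ℝ) - 2) * ((k:ℝ) * 2 ^ k)⁻¹) • s := by
      rw [hs, hvchi, A_mulVec_chi _ A hA]
      norm_num
    rw [hsA, dotProduct_smul, smul_eq_mul]
    have hss : s ⬝ᵥ s = (2:ℝ)^k := by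
      rw [hs, hvchi]
      show ∑ x, chi {(⟨0, by omega⟩ : Fin k)} x * chi {(⟨0, by omega⟩ : Fin k)} x = _
      rw [Finset.sum_congr rfl fun x _ => chi_sq _ x, Finset.sum_const, Finset.card_univ]
      have hcard : Fintype.card (Fin k → Bool) = 2 ^ k := by
        simp [Fintype.card_fun]
      rw [hcard]
      simp [nsmul_eq_mul]
    rw [hss]
    field_simp
  · -- positivity
    have h2r : (2:ℝ) < k := by exact_mod_cast hk
    exact div_pos (by linarith) (by linarith)
end
end
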